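/- Let N be a positive natural number, let P : Fin N → ℝ be a probability distribution with P[t] > 0 for every t, and let S ⊆ Fin N be nonempty. For every Q : Fin N → ℝ with Q[t] ≥ 0 for all t, ∑_t Q[t] = 1, and Q[t] = 0 for all t ∉ S, one has D_KL(Q ‖ P) ≥ −log(∑_{i ∈ S} P[i]); moreover, the renormalized restriction Q*[t] = P[t]/(∑_{i ∈ S} P[i]) for t ∈ S (and 0 otherwise) attains this bound, so the minimum value of the KL divergence over distributions supported on S equals −log(∑_{i ∈ S} P[i]). -/
import Mathlib


open Finset Real

/-- Kullback–Leibler divergence between finitely supported distributions,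
with the convention that the summand is `0` when `Q t = 0`. -/
noncomputable def DKL {N : ℕ} (Q P : Fin N → ℝ) : ℝ :=
  ∑ t, if Q t = 0 then 0 else Q t * Real.log (Q t / P t)

theorem kl_min_value {N : ℕ} (hN : 0 < N) (P : Fin N → ℝ)
    (hPpos : ∀ t, 0 < P t) (hPsum : ∑ t, P t = 1)
    (S : Finset (Fin N)) (hS : S.Nonempty) :
    (∀ Q : Fin N → ℝ, (∀ t, 0 ≤ Q t) → (∑ t, Q t = 1) → (∀ t ∉ S, Q t = 0) →
      DKL Q P ≥ - Real.log (∑ i ∈ S, P i)) ∧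
    DKL (fun t => if t ∈ S then P t / (∑ i ∈ S, P i) else 0) P
      = - Real.log (∑ i ∈ S, P i) := by
  set Z : ℝ := ∑ i ∈ S, P i with hZdef
  have hZ : 0 < Z := Finset.sum_pos (fun i _ => hPpos i) hS
  constructor
  · intro Q hQ0 hQ1 hQS
    have hQS1 : ∑ t ∈ S, Q t = 1 := by
      rw [← hQ1]
      exact Finset.sum_subset (Finset.subset_univ S) (fun t _ ht => hQS t ht)
    have hDKL : DKL Q P = ∑ t ∈ S,
        (if Q t = 0 then 0 else Q t * Real.log (Q t / P t)) := by
      unfold DKL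
      exact (Finset.sum_subset (Finset.subset_univ S)
        (fun t _ ht => by simp [hQS t ht])).symm
    rw [ge_iff_le, hDKL]
    have key : ∑ t ∈ S, (Q t - P t / Z - Q t * Real.log Z)
        ≤ ∑ t ∈ S, (if Q t = 0 then 0 else Q t * Real.log (Q t / P t)) := by
      apply Finset.sum_le_sum
      intro t _
      by_cases h : Q t = 0
      · have := div_pos (hPpos t) hZ
        simp [h]
        linarith
      · simp only [h, if_false]
        have hQt : 0 < Q t := lt_of_le_of_ne (hQ0 t) (Ne.symm h)
        have h1 : Real.log (P t / (Q t * Z)) ≤ P t / (Q t * Z) - 1 :=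
          Real.log_le_sub_one_of_pos (div_pos (hPpos t) (mul_pos hQt hZ))
        have h2 : Real.log (P t / (Q t * Z))
            = Real.log (P t) - (Real.log (Q t) + Real.log Z) := by
          rw [Real.log_div (ne_of_gt (hPpos t)) (by positivity),
            Real.log_mul (ne_of_gt hQt) (ne_of_gt hZ)]
        have h3 : Real.log (Q t / P t) = Real.log (Q t) - Real.log (P t) :=
          Real.log_div (ne_of_gt hQt) (ne_of_gt (hPpos t))
        have h4 : Q t * (P t / (Q t * Z)) = P t / Z := by field_simp
        nlinarith [mul_le_mul_of_nonneg_left h1 (le_of_lt hQt)]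
    refine le_trans (le_of_eq ?_) key
    rw [Finset.sum_sub_distrib, Finset.sum_sub_distrib, ← Finset.sum_div,
      ← Finset.sum_mul, hQS1, ← hZdef, div_self (ne_of_gt hZ)]
    ring
  · unfold DKL
    have h : ∀ t, (if (if t ∈ S then P t / Z else 0) = 0 then 0
        else (if t ∈ S then P t / Z else 0) *
          Real.log ((if t ∈ S then P t / Z else 0) / P t))
        = if t ∈ S then (P t / Z) * Real.log (1 / Z) else 0 := by
      intro t
      by_cases ht : t ∈ S
      · have hpos : P t / Z ≠ 0 := ne_of_gt (div_pos (hPpos t) hZ)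
        have : P t / Z / P t = 1 / Z := by
          rw [div_div, mul_comm, ← div_div, div_self (ne_of_gt (hPpos t))]
        simp [ht, hpos, this]
      · simp [ht]
    simp only [h]
    rw [Finset.sum_ite_mem, Finset.univ_inter, ← Finset.sum_mul,
      ← Finset.sum_div, ← hZdef, div_self (ne_of_gt hZ), one_mul, one_div,
      Real.log_inv]
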